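/- Let G be a P5-free graph, let C ⊆ V(G) be nonempty such that the induced subgraph G[C] is connected and C admits a partition into two sets that are independent in G (so G[C] is bipartite). Let D ⊆ C with |D| ≤ 3 and C ⊆ N[D] (D dominates C). Let R = N(C) \ N(D), and assume that the vertex set of every connected component of the induced subgraph G[R] is a module in G. Then there exists a set D̃ ⊆ R ∪ C with D ⊆ D̃ and |D̃ \ D| ≤ 3 (hence |D̃| ≤ 6) such that D̃ is a dominating set of the induced subgraph G[R ∪ C], i.e., every vertex of R ∪ C lies in D̃ or is adjacent in G to a vertex of D̃. -/

import Mathlib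

open SimpleGraph

/-- A graph is `P₅`-free if it contains no induced subgraph isomorphic to the
path on five vertices (i.e. no graph embedding of `pathGraph 5`). -/
def P5Free {V : Type*} (G : SimpleGraph V) : Prop :=
  IsEmpty (SimpleGraph.pathGraph 5 ↪g G)

/-- `N(A)`: the set of vertices outside `A` with a neighbor in `A`. -/
def nbhdSet {V : Type*} (G : SimpleGraph V) (A : Set V) : Set V :=
  {v | v ∉ A ∧ ∃ a ∈ A, G.Adj v a}

/-- `N[A] = N(A) ∪ A`. -/
def closedNbhdSet {V : Type*} (G : SimpleGraph V) (A : Set V) : Set V :=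
  nbhdSet G A ∪ A

/-- A set of vertices is independent in `G`. -/
def SetIndep {V : Type*} (G : SimpleGraph V) (A : Set V) : Prop :=
  ∀ x ∈ A, ∀ y ∈ A, ¬ G.Adj x y

/-- `M` is a module in `G`: every vertex outside `M` is adjacent to all of `M`
or to none of `M`. -/
def IsModule {V : Type*} (G : SimpleGraph V) (M : Set V) : Prop :=
  ∀ u ∉ M, (∀ m ∈ M, G.Adj u m) ∨ (∀ m ∈ M, ¬ G.Adj u m)

/-!
For each `d ∈ D`, choose a neighbour `c_d ∈ C` of `d` whose neighbourhood in `R` is maximal.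
Any other neighbour `c' ∈ C` of `d` satisfies `N(c') ∩ R ⊆ N(c_d) ∩ R`: otherwise some `r ∈ R`
sees `c'` but not `c_d`, and then every `x ∈ R` seen by `c_d` is seen by `c'` as well — by the
module property when `x ∼ r`, and because `x – c_d – d – c' – r` would be an induced `P₅`
otherwise (`c_d ≁ c'` as they are on the same side of the bipartition, and `d` has no neighbour
in `R`). This contradicts maximality. Since `D` dominates `C` and every vertex of `R` has a
neighbour in `C`, adding the at most three vertices `c_d` to `D` dominates `R ∪ C`.
-/

section

variable {V : Type*} {G : SimpleGraph V}

lemma P5Free.false_of_path (hP5 : P5Free G) {v₀ v₁ v₂ v₃ v₄ : V}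
    (h01 : G.Adj v₀ v₁) (h12 : G.Adj v₁ v₂) (h23 : G.Adj v₂ v₃) (h34 : G.Adj v₃ v₄)
    (h02 : ¬ G.Adj v₀ v₂) (h03 : ¬ G.Adj v₀ v₃) (h04 : ¬ G.Adj v₀ v₄)
    (h13 : ¬ G.Adj v₁ v₃) (h14 : ¬ G.Adj v₁ v₄) (h24 : ¬ G.Adj v₂ v₄) : False := by
  have hinj : Function.Injective ![v₀, v₁, v₂, v₃, v₄] := by
    intro a b hab
    fin_cases a <;> fin_cases b <;> simp_all [G.ne_of_adj, G.adj_comm]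
  refine hP5.false ⟨⟨![v₀, v₁, v₂, v₃, v₄], hinj⟩, fun {a b} => ?_⟩
  change G.Adj (![v₀, v₁, v₂, v₃, v₄] a) (![v₀, v₁, v₂, v₃, v₄] b) ↔ (pathGraph 5).Adj a b
  fin_cases a <;> fin_cases b <;>
    simp [pathGraph_adj, G.adj_comm, h01, h12, h23, h34, h02, h03, h04, h13, h14, h24]

lemma IsModule.adj_of_adj {M : Set V} (hM : IsModule G M) {u m m' : V} (hu : u ∉ M)
    (hm : m ∈ M) (hm' : m' ∈ M) (hum : G.Adj u m) : G.Adj u m' :=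
  (hM u hu).elim (fun hall => hall m' hm') fun hnone => absurd hum (hnone m hm)

lemma not_adj_of_notMem_nbhdSet {A : Set V} {v a : V} (hvA : v ∉ A)
    (hv : v ∉ nbhdSet G A) (ha : a ∈ A) : ¬ G.Adj v a :=
  fun h => hv ⟨hvA, a, ha, h⟩

lemma setIndep_sep_adj_of_union {A B : Set V} (hA : SetIndep G A) (hB : SetIndep G B)
    {d : V} (hd : d ∈ A ∪ B) : SetIndep G {x ∈ A ∪ B | G.Adj d x} := by
  rintro x ⟨hx, hdx⟩ y ⟨hy, hdy⟩ hxy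
  rcases hd with hd | hd <;> rcases hx with hx | hx <;> rcases hy with hy | hy
  all_goals first
    | exact hA _ hd _ hx hdx | exact hA _ hd _ hy hdy | exact hA _ hx _ hy hxy
    | exact hB _ hd _ hx hdx | exact hB _ hd _ hy hdy | exact hB _ hx _ hy hxy

section ModularComponents

variable {R : Set V}
  (hmod : ∀ K : (G.induce R).ConnectedComponent, IsModule G (Subtype.val '' K.supp))
include hmod

lemma P5Free.adj_of_adj_of_modular_components (hP5 : P5Free G) {d c c' r x : V}
    (hdc : G.Adj d c) (hdc' : G.Adj d c') (hcc' : ¬ G.Adj c c') (hc' : c' ∉ R)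
    (hdR : ∀ y ∈ R, ¬ G.Adj d y) (hr : r ∈ R) (hx : x ∈ R)
    (hc'r : G.Adj c' r) (hcr : ¬ G.Adj c r) (hcx : G.Adj c x) : G.Adj c' x := by
  by_cases hxr : G.Adj x r
  · set K := (G.induce R).connectedComponentMk ⟨r, hr⟩
    have hrK : r ∈ Subtype.val '' K.supp := ⟨⟨r, hr⟩, rfl, rfl⟩
    have hxK : x ∈ Subtype.val '' K.supp :=
      ⟨⟨x, hx⟩, ConnectedComponent.sound (Adj.reachable (G := G.induce R) hxr), rfl⟩
    exact (hmod K).adj_of_adj (fun ⟨y, _, hy⟩ => hc' (hy ▸ y.2)) hrK hxK hc'r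
  · by_contra hc'x
    exact hP5.false_of_path hcx.symm hdc.symm hdc' hc'r (fun h => hdR x hx h.symm)
      (fun h => hc'x h.symm) hxr hcc' hcr (hdR r hr)

lemma P5Free.exists_adj_forall_adj_of_modular_components [Finite V] (hP5 : P5Free G)
    {d : V} {S : Set V} (hS : S.Nonempty) (hdS : ∀ c ∈ S, G.Adj d c) (hSind : SetIndep G S)
    (hSR : ∀ c ∈ S, c ∉ R) (hdR : ∀ y ∈ R, ¬ G.Adj d y) :
    ∃ c ∈ S, ∀ c' ∈ S, ∀ r ∈ R, G.Adj c' r → G.Adj c r := by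
  obtain ⟨c, hcS, hmax⟩ :=
    S.toFinite.exists_maximalFor (fun c => {y ∈ R | G.Adj c y}) S hS
  refine ⟨c, hcS, fun c' hc'S r hr hc'r => ?_⟩
  by_contra hcr
  have hsub : {y ∈ R | G.Adj c y} ⊆ {y ∈ R | G.Adj c' y} := fun x ⟨hx, hcx⟩ =>
    ⟨hx, hP5.adj_of_adj_of_modular_components hmod (hdS c hcS) (hdS c' hc'S)
      (hSind c hcS c' hc'S) (hSR c' hc'S) hdR hr hx hc'r hcr hcx⟩
  exact hcr (hmax hc'S hsub ⟨hr, hc'r⟩).2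

lemma P5Free.exists_mem_forall_adj_of_modular_components [Finite V] (hP5 : P5Free G)
    {A B : Set V} (hA : SetIndep G A) (hB : SetIndep G B) (hR : ∀ r ∈ R, r ∉ A ∪ B)
    {d : V} (hd : d ∈ A ∪ B) (hdR : ∀ y ∈ R, ¬ G.Adj d y) :
    ∃ c ∈ A ∪ B, ∀ c' ∈ A ∪ B, G.Adj d c' → ∀ r ∈ R, G.Adj c' r → G.Adj c r := by
  rcases ({c ∈ A ∪ B | G.Adj d c} : Set V).eq_empty_or_nonempty with hS | hS
  · exact ⟨d, hd, fun c' hc' hdc' => absurd hS (Set.nonempty_iff_ne_empty.1 ⟨c', hc', hdc'⟩)⟩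
  · obtain ⟨c, hc, hcmax⟩ := hP5.exists_adj_forall_adj_of_modular_components hmod hS
      (fun c hc => hc.2) (setIndep_sep_adj_of_union hA hB hd)
      (fun c hc hcR => hR c hcR hc.1) hdR
    exact ⟨c, hc.1, fun c' hc' hdc' => hcmax c' ⟨hc', hdc'⟩⟩

end ModularComponents

end

theorem small_dominating_set_of_R_union_C_general
    {V : Type*} [Fintype V] [DecidableEq V] (G : SimpleGraph V) (hP5 : P5Free G)
    (C : Set V)
    (hbip : ∃ A B : Set V, A ∪ B = C ∧ Disjoint A B ∧ SetIndep G A ∧ SetIndep G B)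
    (D : Finset V) (hDC : (↑D : Set V) ⊆ C) (hDcard : D.card ≤ 3)
    (hdom : C ⊆ closedNbhdSet G (↑D : Set V))
    (hmod : ∀ c : (G.induce (nbhdSet G C \ nbhdSet G (↑D : Set V))).ConnectedComponent,
      IsModule G (Subtype.val '' c.supp)) :
    ∃ Dt : Finset V,
      (↑Dt : Set V) ⊆ (nbhdSet G C \ nbhdSet G (↑D : Set V)) ∪ C ∧
      D ⊆ Dt ∧ (Dt \ D).card ≤ 3 ∧
      ∀ v ∈ (nbhdSet G C \ nbhdSet G (↑D : Set V)) ∪ C,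
        v ∈ Dt ∨ ∃ d ∈ Dt, G.Adj v d := by
  obtain ⟨A, B, rfl, -, hA, hB⟩ := hbip
  set R := nbhdSet G (A ∪ B) \ nbhdSet G ↑D
  have hdR : ∀ d ∈ D, ∀ r ∈ R, ¬ G.Adj d r := fun d hd r hr h =>
    not_adj_of_notMem_nbhdSet (fun h' => hr.1.1 (hDC h')) hr.2 hd h.symm
  have key (d : V) (hd : d ∈ D) :=
    hP5.exists_mem_forall_adj_of_modular_components hmod hA hB (fun r hr => hr.1.1) (hDC hd)
      (hdR d hd)
  choose! f hfC hf using key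
  refine ⟨D ∪ D.image f, ?_, Finset.subset_union_left, ?_, ?_⟩
  · intro x hx
    simp only [Finset.coe_union, Finset.coe_image, Set.mem_union, Finset.mem_coe] at hx
    rcases hx with hx | ⟨d, hd, rfl⟩
    exacts [Or.inr (hDC hx), Or.inr (hfC d hd)]
  · calc ((D ∪ D.image f) \ D).card ≤ (D.image f).card := by
          rw [Finset.union_sdiff_left]; exact Finset.card_le_card Finset.sdiff_subset
      _ ≤ 3 := Finset.card_image_le.trans hDcard
  · rintro v (hvR | hvC)
    · obtain ⟨-, c, hc, hvc⟩ := hvR.1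
      rcases hdom hc with ⟨-, d, hd, hcd⟩ | hcD
      · exact Or.inr ⟨f d, Finset.mem_union_right _ (Finset.mem_image_of_mem f hd),
          (hf d hd c hc hcd.symm v hvR hvc.symm).symm⟩
      · exact absurd ⟨fun h => hvR.1.1 (hDC h), c, hcD, hvc⟩ hvR.2
    · rcases hdom hvC with ⟨-, d, hd, hvd⟩ | hvD
      · exact Or.inr ⟨d, Finset.mem_union_left _ hd, hvd⟩
      · exact Or.inl (Finset.mem_union_left _ hvD)

theorem small_dominating_set_of_R_union_C
    {V : Type*} [Fintype V] [DecidableEq V] (G : SimpleGraph V) (hP5 : P5Free G)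
    (C : Set V) (hCne : C.Nonempty) (hconn : (G.induce C).Connected)
    (hbip : ∃ A B : Set V, A ∪ B = C ∧ Disjoint A B ∧ SetIndep G A ∧ SetIndep G B)
    (D : Finset V) (hDC : (↑D : Set V) ⊆ C) (hDcard : D.card ≤ 3)
    (hdom : C ⊆ closedNbhdSet G (↑D : Set V))
    (hmod : ∀ c : (G.induce (nbhdSet G C \ nbhdSet G (↑D : Set V))).ConnectedComponent,
      IsModule G (Subtype.val '' c.supp)) :
    ∃ Dt : Finset V,
      (↑Dt : Set V) ⊆ (nbhdSet G C \ nbhdSet G (↑D : Set V)) ∪ C ∧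
      D ⊆ Dt ∧ (Dt \ D).card ≤ 3 ∧
      ∀ v ∈ (nbhdSet G C \ nbhdSet G (↑D : Set V)) ∪ C,
        v ∈ Dt ∨ ∃ d ∈ Dt, G.Adj v d :=
  small_dominating_set_of_R_union_C_general G hP5 C hbip D hDC hDcard hdom hmod
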